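/- For any attribution rule a (a function mapping a nonempty time-ordered sequence of impressions and a conversion to nonnegative weights on the impressions summing to 1), the user × publisher adjacency relation with post-attribution contribution bound enforcement is invalid: for every integer p ≥ 2 there exist adjacent datasets D and D' (differing by all impressions of one (user, publisher) pair), with contribution bound r = 1, such that ‖attr(D) - attr(D')‖₁ ≥ 0.5(p - 1). -/

import Mathlib

/-! Framework for differentially private ad conversion measurement
(Delaney et al., "Differentially Private Ad Conversion Measurement"). -/

structure Impression where
  time : ℕ
  user : ℕ
  pub : ℕ
  adv : ℕ
  id : ℕ
deriving DecidableEq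

structure Conversion where
  time : ℕ
  user : ℕ
  adv : ℕ
  id : ℕ
deriving DecidableEq

structure Dataset where
  imps : List Impression
  convs : List Conversion

/-- An attribution rule maps a time-ordered list of impressions and a conversion
to a list of credits (one per impression). -/
abbrev AttrRule := List Impression → Conversion → List ℝ

/-- A valid attribution rule outputs one nonnegative weight per impression, summing to 1. -/
def ValidRule (a : AttrRule) : Prop :=
  ∀ is c, is ≠ [] →
    (a is c).length = is.length ∧ (a is c).sum = 1 ∧ ∀ w ∈ a is c, (0 : ℝ) ≤ w

/-- Impressions eligible for attribution of conversion `c`: those occurring earlier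
with the same user and advertiser. -/
def eligible (D : Dataset) (c : Conversion) : List Impression :=
  D.imps.filter fun i => decide (i.time < c.time ∧ i.user = c.user ∧ i.adv = c.adv)

/-- ℓ₁ distance between attributed datasets. -/
noncomputable def l1dist (w w' : (Impression × Conversion) →₀ ℝ) : ℝ :=
  (w - w').sum fun _ v => |v|

/-- Impressions and conversions are listed in time order. -/
def SortedDS (D : Dataset) : Prop :=
  D.imps.Pairwise (fun i j => i.time ≤ j.time) ∧
  D.convs.Pairwise (fun c c' => c.time ≤ c'.time)

/-- Inner loop of post-attribution contribution-bound enforcement: each weighted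
(impression, conversion) pair is kept only if the remaining bound of its scope covers
the weight, in which case the weight is deducted. -/
noncomputable def applyPairs {σ : Type} [DecidableEq σ] (s : Impression → σ) (c : Conversion) :
    List (Impression × ℝ) → (σ → ℝ) × ((Impression × Conversion) →₀ ℝ) →
      (σ → ℝ) × ((Impression × Conversion) →₀ ℝ)
  | [], st => st
  | (i, w) :: rest, st =>
      if w ≤ st.1 (s i) then
        applyPairs s c rest
          (Function.update st.1 (s i) (st.1 (s i) - w), st.2 + Finsupp.single (i, c) w)
      else
        applyPairs s c rest st

/-- Attribution with post-attribution contribution bound enforcement (Algorithm 1),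
with contribution bounding scope map `s` and contribution bound `r`. -/
noncomputable def postAttr {σ : Type} [DecidableEq σ] (a : AttrRule) (s : Impression → σ)
    (r : ℝ) (D : Dataset) : (Impression × Conversion) →₀ ℝ :=
  (D.convs.foldl
    (fun st c => applyPairs s c ((eligible D c).zip (a (eligible D c) c)) st)
    ((fun _ => r : σ → ℝ), (0 : (Impression × Conversion) →₀ ℝ))).2

/-- Attribution with pre-attribution contribution bound enforcement (Algorithm 2):
for each conversion, every scope with an eligible impression pays one unit of its bound
if available, otherwise its impressions are excluded from attribution. -/
noncomputable def preAttr {σ : Type} [DecidableEq σ] (a : AttrRule) (s : Impression → σ)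
    (r : ℝ) (D : Dataset) : (Impression × Conversion) →₀ ℝ :=
  (D.convs.foldl
    (fun (st : (σ → ℝ) × ((Impression × Conversion) →₀ ℝ)) c =>
      let el := eligible D c
      let surv := el.filter fun i => decide ((1 : ℝ) ≤ st.1 (s i))
      let scopes := (el.map s).dedup
      ((fun x => if x ∈ scopes ∧ (1 : ℝ) ≤ st.1 x then st.1 x - 1 else st.1 x : σ → ℝ),
        st.2 + ((surv.zip (a surv c)).map fun p => Finsupp.single (p.1, c) p.2).sum))
    ((fun _ => r : σ → ℝ), (0 : (Impression × Conversion) →₀ ℝ))).2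

/-- Attribution without any contribution bound enforcement. -/
noncomputable def attrNoCap (a : AttrRule) (D : Dataset) :
    (Impression × Conversion) →₀ ℝ :=
  (D.convs.map fun c =>
    (((eligible D c).zip (a (eligible D c) c)).map fun p => Finsupp.single (p.1, c) p.2).sum).sum

/-- Adjacency: `D'` results from `D` by adding a single impression (in time order). -/
def AddOneImpression (D D' : Dataset) : Prop :=
  ∃ (i0 : Impression) (l₁ l₂ : List Impression),
    D.imps = l₁ ++ l₂ ∧ D'.imps = l₁ ++ i0 :: l₂ ∧ D.convs = D'.convs

/-- Adjacency: `D` results from `D'` by removing all impressions whose scope (under `si`)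
is `v` and all conversions whose scope (under `sc`) is `v`. -/
def RemovesScope {σ : Type} [DecidableEq σ] (si : Impression → σ)
    (sc : Conversion → Option σ) (v : σ) (D D' : Dataset) : Prop :=
  D.imps = D'.imps.filter (fun i => decide (si i ≠ v)) ∧
  D.convs = D'.convs.filter (fun c => decide (sc c ≠ some v))

/-- First-touch attribution. -/
noncomputable def FTA : AttrRule := fun is _ =>
  match is with
  | [] => []
  | _ :: t => 1 :: t.map fun _ => 0

/-- Last-touch attribution. -/
noncomputable def LTA : AttrRule := fun is _ =>
  match is with
  | [] => []
  | _ :: _ => List.replicate (is.length - 1) 0 ++ [1]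

/-- Uniform multi-touch attribution. -/
noncomputable def UNI : AttrRule := fun is _ => is.map fun _ => ((is.length : ℝ))⁻¹

/-- U-shaped attribution. -/
noncomputable def USH : AttrRule := fun is _ =>
  match is with
  | [] => []
  | [_] => [1]
  | [_, _] => [0.5, 0.5]
  | _ :: _ :: _ :: _ =>
      (0.4 : ℝ) :: (List.replicate (is.length - 2) ((0.2 : ℝ) / ((is.length : ℝ) - 2)) ++ [0.4])

/-- Exponential time decay attribution with half-life `th`. -/
noncomputable def EXPR (th : ℝ) : AttrRule := fun is c =>
  let wt : Impression → ℝ := fun i => (2 : ℝ) ^ (-(((c.time : ℝ) - (i.time : ℝ)) / th))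
  is.map fun i => wt i / (is.map wt).sum


/-! For every pair of publishers `{j, k}` among `p`, let one advertiser show one user an
impression on each of the two publishers, followed by a conversion. The two publishers' shares
of that conversion add up to 1, so by averaging some publisher `ℓ` collects at least `(p - 1)/2`
over its `p - 1` pairs. Keep only these advertisers. Once `ℓ`'s impressions are removed, every
conversion has a single eligible impression, on pairwise distinct publishers, so each gets
weight 1 and the bound `r = 1` cuts nothing; with them present, the other impression gets at most
`1 - share` even without enforcement, and enforcement only removes credit. -/

noncomputable def credit (a : AttrRule) (is : List Impression) (c : Conversion) :
    Impression →₀ ℝ :=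
  ((is.zip (a is c)).map fun x => Finsupp.single x.1 x.2).sum

noncomputable def creditPairs (c : Conversion) (l : List (Impression × ℝ)) :
    (Impression × Conversion) →₀ ℝ :=
  (l.map fun x => Finsupp.single (x.1, c) x.2).sum

section Enforcement

variable {σ : Type} [DecidableEq σ] (s : Impression → σ) (c : Conversion)

lemma applyPairs_snd_le (l : List (Impression × ℝ))
    (st : (σ → ℝ) × ((Impression × Conversion) →₀ ℝ)) (hl : ∀ x ∈ l, 0 ≤ x.2) :
    (applyPairs s c l st).2 ≤ st.2 + creditPairs c l := by
  induction l generalizing st with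
  | nil => simp [applyPairs, creditPairs]
  | cons x l ih =>
    obtain ⟨i, w⟩ := x
    have hw : 0 ≤ w := hl _ List.mem_cons_self
    have hl' := fun y hy => hl y (List.mem_cons_of_mem _ hy)
    simp only [applyPairs, creditPairs, List.map_cons, List.sum_cons] at ih ⊢
    split
    · exact (ih _ hl').trans (by rw [add_assoc])
    · exact (ih _ hl').trans (by simpa using hw)

lemma applyPairs_fst_of_notMem (l : List (Impression × ℝ))
    (st : (σ → ℝ) × ((Impression × Conversion) →₀ ℝ)) {v : σ}
    (hv : v ∉ l.map (s ∘ Prod.fst)) : (applyPairs s c l st).1 v = st.1 v := by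
  induction l generalizing st with
  | nil => rfl
  | cons x l ih =>
    obtain ⟨i, w⟩ := x
    simp only [List.map_cons, List.mem_cons, not_or, Function.comp_apply] at hv
    rw [applyPairs]
    split
    · exact (ih _ hv.2).trans (Function.update_of_ne hv.1 _ _)
    · exact ih _ hv.2

lemma applyPairs_snd_of_nodup (l : List (Impression × ℝ))
    (st : (σ → ℝ) × ((Impression × Conversion) →₀ ℝ))
    (hnd : (l.map (s ∘ Prod.fst)).Nodup) (hl : ∀ x ∈ l, x.2 ≤ st.1 (s x.1)) :
    (applyPairs s c l st).2 = st.2 + creditPairs c l := by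
  induction l generalizing st with
  | nil => simp [applyPairs, creditPairs]
  | cons x l ih =>
    obtain ⟨i, w⟩ := x
    rw [List.map_cons, List.nodup_cons] at hnd
    have hl' : ∀ y ∈ l, y.2 ≤ (Function.update st.1 (s i) (st.1 (s i) - w)) (s y.1) := by
      intro y hy
      rw [Function.update_of_ne]
      · exact hl y (List.mem_cons_of_mem _ hy)
      · exact fun h => hnd.1 (List.mem_map.2 ⟨y, hy, h⟩)
    rw [applyPairs, if_pos (hl _ List.mem_cons_self), ih _ hnd.2 hl']
    simp only [creditPairs, List.map_cons, List.sum_cons, add_assoc]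

end Enforcement

section Fold

variable {σ : Type} [DecidableEq σ] (s : Impression → σ)
  (pairs : Conversion → List (Impression × ℝ))

lemma foldl_applyPairs_snd_le (cs : List Conversion)
    (st : (σ → ℝ) × ((Impression × Conversion) →₀ ℝ)) (hpairs : ∀ c, ∀ x ∈ pairs c, 0 ≤ x.2) :
    (cs.foldl (fun st c => applyPairs s c (pairs c) st) st).2 ≤
      st.2 + (cs.map fun c => creditPairs c (pairs c)).sum := by
  induction cs generalizing st with
  | nil => simp
  | cons c cs ih =>
    rw [List.foldl_cons, List.map_cons, List.sum_cons, ← add_assoc]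
    exact (ih _).trans (add_le_add_left (applyPairs_snd_le s c _ _ (hpairs c)) _)

lemma foldl_applyPairs_snd_of_nodup (cs : List Conversion)
    (st : (σ → ℝ) × ((Impression × Conversion) →₀ ℝ))
    (hnd : (cs.flatMap fun c => (pairs c).map (s ∘ Prod.fst)).Nodup)
    (hw : ∀ c ∈ cs, ∀ x ∈ pairs c, x.2 ≤ st.1 (s x.1)) :
    (cs.foldl (fun st c => applyPairs s c (pairs c) st) st).2 =
      st.2 + (cs.map fun c => creditPairs c (pairs c)).sum := by
  induction cs generalizing st with
  | nil => simp
  | cons c cs ih =>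
    rw [List.flatMap_cons, List.nodup_append] at hnd
    have hw' : ∀ c' ∈ cs, ∀ x ∈ pairs c', x.2 ≤ (applyPairs s c (pairs c) st).1 (s x.1) := by
      intro c' hc' x hx
      rw [applyPairs_fst_of_notMem]
      · exact hw c' (List.mem_cons_of_mem _ hc') x hx
      · intro hmem
        exact hnd.2.2 _ hmem _ (List.mem_flatMap.2 ⟨c', hc', List.mem_map_of_mem hx⟩) rfl
    rw [List.foldl_cons, ih _ hnd.2.1 hw',
      applyPairs_snd_of_nodup s c _ _ hnd.1 (hw c List.mem_cons_self)]
    simp only [List.map_cons, List.sum_cons, add_assoc]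

end Fold

lemma ValidRule.nonneg_of_mem_zip {a : AttrRule} (ha : ValidRule a) {is : List Impression}
    {c : Conversion} {x : Impression × ℝ} (hx : x ∈ is.zip (a is c)) : 0 ≤ x.2 := by
  have hne : is ≠ [] := by rintro rfl; simp at hx
  exact (ha is c hne).2.2 _ (List.of_mem_zip hx).2

lemma ValidRule.map_fst_zip {a : AttrRule} (ha : ValidRule a) (is : List Impression)
    (c : Conversion) : (is.zip (a is c)).map Prod.fst = is := by
  rcases eq_or_ne is [] with rfl | hne
  · simp
  · exact List.map_fst_zip (ha is c hne).1.ge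

theorem postAttr_le_attrNoCap {a : AttrRule} (ha : ValidRule a) {σ : Type} [DecidableEq σ]
    (s : Impression → σ) (r : ℝ) (D : Dataset) : postAttr a s r D ≤ attrNoCap a D :=
  (foldl_applyPairs_snd_le s _ D.convs _ fun _ _ hx => ha.nonneg_of_mem_zip hx).trans_eq
    (zero_add _)

theorem postAttr_eq_attrNoCap {a : AttrRule} (ha : ValidRule a) {σ : Type} [DecidableEq σ]
    (s : Impression → σ) (r : ℝ) (D : Dataset)
    (hnd : (D.convs.flatMap fun c => (eligible D c).map s).Nodup)
    (hr : ∀ c ∈ D.convs, ∀ w ∈ a (eligible D c) c, w ≤ r) :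
    postAttr a s r D = attrNoCap a D := by
  refine (foldl_applyPairs_snd_of_nodup s _ D.convs _ ?_ ?_).trans (zero_add _)
  · simpa only [← List.map_map, ha.map_fst_zip] using hnd
  · exact fun c hc x hx => hr c hc _ (List.of_mem_zip hx).2

lemma creditPairs_zip (a : AttrRule) (is : List Impression) (c : Conversion) :
    creditPairs c (is.zip (a is c)) = (credit a is c).mapDomain (·, c) := by
  rw [credit, creditPairs, ← Finsupp.mapDomain.addMonoidHom_apply, map_list_sum, List.map_map]
  simp [Function.comp_def]

lemma attrNoCap_apply {a : AttrRule} {D : Dataset} (hD : D.convs.Nodup) {c : Conversion}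
    (hc : c ∈ D.convs) (i : Impression) :
    attrNoCap a D (i, c) = credit a (eligible D c) c i := by
  classical
  change (D.convs.map fun c' => creditPairs c' ((eligible D c').zip (a (eligible D c') c'))).sum
    (i, c) = _
  simp only [creditPairs_zip]
  rw [← List.sum_toFinset _ hD, Finsupp.finsetSum_apply,
    Finset.sum_eq_single_of_mem c (List.mem_toFinset.2 hc)]
  · exact Finsupp.mapDomain_apply (fun _ _ h => congrArg Prod.fst h) _ i
  · intro c' _ hc'
    refine Finsupp.mapDomain_of_notMem_range _ _ ?_
    rintro ⟨j, hj⟩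
    exact hc' (congrArg Prod.snd hj)

lemma ValidRule.apply_singleton {a : AttrRule} (ha : ValidRule a) (i : Impression)
    (c : Conversion) : a [i] c = [1] := by
  obtain ⟨hlen, hsum, -⟩ := ha [i] c (List.cons_ne_nil _ _)
  obtain ⟨w, hw⟩ := List.length_eq_one_iff.1 hlen
  simp_all

lemma ValidRule.credit_singleton {a : AttrRule} (ha : ValidRule a) (i : Impression)
    (c : Conversion) : credit a [i] c i = 1 := by
  simp [credit, ha.apply_singleton]

lemma ValidRule.credit_pair_add {a : AttrRule} (ha : ValidRule a) {i j : Impression}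
    (hij : i ≠ j) (c : Conversion) : credit a [i, j] c i + credit a [i, j] c j = 1 := by
  obtain ⟨hlen, hsum, -⟩ := ha [i, j] c (List.cons_ne_nil _ _)
  obtain ⟨x, y, hxy⟩ := List.length_eq_two.1 hlen
  simp_all [credit, Ne.symm hij]

lemma sum_abs_sub_le_l1dist {ι : Type} (w w' : (Impression × Conversion) →₀ ℝ) (t : Finset ι)
    (y : ι → Impression × Conversion) (hy : Set.InjOn y t) :
    ∑ k ∈ t, |w (y k) - w' (y k)| ≤ l1dist w w' := by
  classical
  rw [← Finset.sum_image (f := fun z => |w z - w' z|) hy, l1dist,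
    Finsupp.sum_of_support_subset _ (Finset.subset_union_right (s₁ := t.image y)) _
      fun _ _ => abs_zero]
  exact Finset.sum_le_sum_of_subset_of_nonneg Finset.subset_union_left
    fun _ _ _ => abs_nonneg _

lemma List.flatMap_ite_eq_of_nodup {α β : Type} [DecidableEq α] {l : List α} (hl : l.Nodup)
    {b : α} (hb : b ∈ l) (x : List β) : l.flatMap (fun a => if a = b then x else []) = x := by
  induction l with
  | nil => cases hb
  | cons a l ih =>
    rw [List.nodup_cons] at hl
    rw [List.flatMap_cons]
    by_cases hab : a = b
    · subst hab
      have hrest : l.flatMap (fun a' => if a' = a then x else []) = [] :=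
        List.flatMap_eq_nil_iff.2 fun a' ha' => if_neg (ne_of_mem_of_not_mem ha' hl.1)
      rw [if_pos rfl, hrest, List.append_nil]
    · rw [if_neg hab, List.nil_append, ih hl.2 ((List.mem_cons.1 hb).resolve_left (Ne.symm hab))]

/-- Summing over `i` counts every pair `{i, j}` once, so the total is `#s (#s - 1) / 2`. -/
lemma Finset.exists_half_le_sum_erase {ι : Type} [DecidableEq ι] {s : Finset ι}
    (hs : s.Nonempty) (f : ι → ι → ℝ) (hf : ∀ i ∈ s, ∀ j ∈ s, i ≠ j → f i j + f j i = 1) :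
    ∃ i ∈ s, ((s.card : ℝ) - 1) / 2 ≤ ∑ j ∈ s.erase i, f i j := by
  have hswap : ∑ i ∈ s, ∑ j ∈ s.erase i, f j i = ∑ i ∈ s, ∑ j ∈ s.erase i, f i j :=
    Finset.sum_comm' fun i j => by simp only [Finset.mem_erase]; tauto
  have htotal : ∑ i ∈ s, ∑ j ∈ s.erase i, f i j = ∑ _i ∈ s, ((s.card : ℝ) - 1) / 2 := by
    have hpair : ∀ i ∈ s, ∑ j ∈ s.erase i, (f i j + f j i) = (s.card : ℝ) - 1 := by
      intro i hi
      rw [Finset.sum_congr rfl fun j hj => hf i hi j (Finset.mem_of_mem_erase hj)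
        (Finset.ne_of_mem_erase hj).symm, Finset.sum_const, Finset.card_erase_of_mem hi,
        nsmul_one, Nat.cast_pred (Finset.card_pos.2 hs)]
    have := Finset.sum_congr rfl hpair
    simp only [Finset.sum_add_distrib, hswap] at this
    rw [Finset.sum_const, nsmul_eq_mul] at this ⊢
    linarith
  exact Finset.exists_le_of_sum_le hs htotal.ge

namespace UserPublisherCounterexample

/-- The advertiser of publishers `ℓ` and `m`, encoded as the sorted pair: this fixes the order of
its two impressions, on which the attribution rule may depend. -/
def edge (ℓ m : ℕ) : ℕ × ℕ := (min ℓ m, max ℓ m)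

def imp (e : ℕ × ℕ) (m : ℕ) : Impression := ⟨0, 0, m, Nat.pair e.1 e.2, 0⟩

def conv (e : ℕ × ℕ) : Conversion := ⟨1, 0, Nat.pair e.1 e.2, 0⟩

def adImps (e : ℕ × ℕ) : List Impression := [imp e e.1, imp e e.2]

noncomputable def share (a : AttrRule) (ℓ m : ℕ) : ℝ :=
  credit a (adImps (edge ℓ m)) (conv (edge ℓ m)) (imp (edge ℓ m) ℓ)

noncomputable def fullDS (ℓ : ℕ) (P : Finset ℕ) : Dataset :=
  ⟨P.toList.flatMap fun m => adImps (edge ℓ m), P.toList.map fun m => conv (edge ℓ m)⟩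

noncomputable def reducedDS (ℓ : ℕ) (P : Finset ℕ) : Dataset :=
  ⟨(fullDS ℓ P).imps.filter fun i => decide ((i.user, i.pub) ≠ (0, ℓ)), (fullDS ℓ P).convs⟩

lemma edge_comm (ℓ m : ℕ) : edge m ℓ = edge ℓ m := by
  rw [edge, edge, min_comm, max_comm]

lemma edge_of_lt {ℓ m : ℕ} (h : ℓ < m) : edge ℓ m = (ℓ, m) := by
  simp [edge, h.le]

lemma conv_edge_inj {ℓ m m' : ℕ} (h : conv (edge ℓ m) = conv (edge ℓ m')) : m = m' := by
  have he : edge ℓ m = edge ℓ m' := Prod.ext_iff.2 (Nat.pair_eq_pair.1 (congrArg Conversion.adv h))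
  have := min_add_max ℓ m
  have := min_add_max ℓ m'
  simp only [edge, Prod.mk.injEq] at he
  omega

lemma share_add_share {a : AttrRule} (ha : ValidRule a) {ℓ m : ℕ} (h : ℓ ≠ m) :
    share a ℓ m + share a m ℓ = 1 := by
  rw [share, share, edge_comm ℓ m]
  rcases h.lt_or_gt with h | h
  · rw [edge_of_lt h]
    exact ha.credit_pair_add (by simp [imp, h.ne]) _
  · rw [edge_comm m ℓ, edge_of_lt h, add_comm]
    exact ha.credit_pair_add (by simp [imp, h.ne]) _

variable {ℓ : ℕ} {P : Finset ℕ}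

lemma fullDS_convs_nodup : (fullDS ℓ P).convs.Nodup :=
  P.nodup_toList.map fun _ _ => conv_edge_inj

lemma eligible_fullDS {m : ℕ} (hm : m ∈ P) :
    eligible (fullDS ℓ P) (conv (edge ℓ m)) = adImps (edge ℓ m) := by
  have hfilter : ∀ m', (adImps (edge ℓ m')).filter
      (fun i => decide (i.time < (conv (edge ℓ m)).time ∧ i.user = (conv (edge ℓ m)).user ∧
        i.adv = (conv (edge ℓ m)).adv)) =
      if m' = m then adImps (edge ℓ m) else [] := by
    intro m'
    split_ifs with hm'
    · subst hm'; simp [adImps, imp, conv]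
    · have hne : conv (edge ℓ m') ≠ conv (edge ℓ m) := fun h => hm' (conv_edge_inj h)
      simp [adImps, imp, conv] at hne ⊢
      exact hne
  rw [eligible, fullDS, List.filter_flatMap, List.flatMap_congr fun m' _ => hfilter m',
    List.flatMap_ite_eq_of_nodup P.nodup_toList (P.mem_toList.2 hm)]

lemma eligible_reducedDS {m : ℕ} (hm : m ∈ P) (hℓ : ℓ ∉ P) :
    eligible (reducedDS ℓ P) (conv (edge ℓ m)) = [imp (edge ℓ m) m] := by
  have hne : ℓ ≠ m := fun h => hℓ (h ▸ hm)
  change ((fullDS ℓ P).imps.filter _).filter _ = _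
  rw [List.filter_comm, ← eligible, eligible_fullDS hm]
  rcases hne.lt_or_gt with h | h
  · simp [edge_of_lt h, adImps, imp, h.ne']
  · simp [edge_comm ℓ m ▸ edge_of_lt h, adImps, imp, h.ne]

lemma attrNoCap_fullDS_apply {a : AttrRule} {m : ℕ} (hm : m ∈ P) :
    attrNoCap a (fullDS ℓ P) (imp (edge ℓ m) m, conv (edge ℓ m)) = share a m ℓ := by
  rw [attrNoCap_apply fullDS_convs_nodup (List.mem_map_of_mem (P.mem_toList.2 hm)),
    eligible_fullDS hm, share, edge_comm]

lemma postAttr_reducedDS_apply {a : AttrRule} (ha : ValidRule a) {m : ℕ} (hm : m ∈ P)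
    (hℓ : ℓ ∉ P) :
    postAttr a (fun i => (i.user, i.pub)) 1 (reducedDS ℓ P) (imp (edge ℓ m) m, conv (edge ℓ m))
      = 1 := by
  have hconvs : (reducedDS ℓ P).convs = P.toList.map fun m => conv (edge ℓ m) := rfl
  have hel : ∀ m ∈ P.toList, eligible (reducedDS ℓ P) (conv (edge ℓ m)) = [imp (edge ℓ m) m] :=
    fun m hm => eligible_reducedDS (P.mem_toList.1 hm) hℓ
  rw [postAttr_eq_attrNoCap ha, attrNoCap_apply (D := reducedDS ℓ P) fullDS_convs_nodup
      (List.mem_map_of_mem (P.mem_toList.2 hm)), eligible_reducedDS hm hℓ, ha.credit_singleton]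
  · rw [hconvs, List.flatMap_map, List.flatMap_congr fun m hm => by rw [hel m hm]]
    simpa [imp, ← List.map_eq_flatMap] using P.nodup_toList.map (Prod.mk_right_injective 0)
  · rw [hconvs]
    intro c hc w hw
    obtain ⟨m, hm, rfl⟩ := List.mem_map.1 hc
    simp_all [ha.apply_singleton]

lemma sortedDS_fullDS : SortedDS (fullDS ℓ P) := by
  have htime : ∀ i ∈ (fullDS ℓ P).imps, i.time = 0 := by
    intro i hi
    simp only [fullDS, adImps, List.mem_flatMap, List.mem_pair] at hi
    obtain ⟨_, _, rfl | rfl⟩ := hi <;> rfl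
  constructor
  · exact List.pairwise_of_forall_mem_list fun i hi j hj => by rw [htime i hi, htime j hj]
  · refine List.pairwise_of_forall_mem_list fun c hc c' hc' => ?_
    obtain ⟨_, _, rfl⟩ := List.mem_map.1 hc
    obtain ⟨_, _, rfl⟩ := List.mem_map.1 hc'
    rfl

lemma share_le_abs_sub {a : AttrRule} (ha : ValidRule a) {m : ℕ} (hm : m ∈ P) (hℓ : ℓ ∉ P) :
    share a ℓ m ≤
      |postAttr a (fun i => (i.user, i.pub)) 1 (reducedDS ℓ P) (imp (edge ℓ m) m, conv (edge ℓ m)) -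
        postAttr a (fun i => (i.user, i.pub)) 1 (fullDS ℓ P) (imp (edge ℓ m) m, conv (edge ℓ m))| :=
    by
  have hfull := postAttr_le_attrNoCap ha (fun i => (i.user, i.pub)) 1 (fullDS ℓ P)
    (imp (edge ℓ m) m, conv (edge ℓ m))
  rw [attrNoCap_fullDS_apply hm] at hfull
  rw [postAttr_reducedDS_apply ha hm hℓ]
  have := share_add_share ha (fun h : ℓ = m => hℓ (h ▸ hm))
  exact (by linarith : share a ℓ m ≤ _).trans (le_abs_self _)

end UserPublisherCounterexample

open UserPublisherCounterexample in
/-- Theorem 5.1: for any attribution rule, the user × publisher adjacency relation with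
post-attribution enforcement is invalid: with bound `r = 1`, for every `p ≥ 2` there are
adjacent datasets (differing by all impressions of one (user, publisher) pair) whose
attributed datasets are at ℓ₁-distance at least `0.5 (p - 1)`. -/
theorem post_attr_user_publisher_invalid (a : AttrRule) (ha : ValidRule a)
    (p : ℕ) (hp : 2 ≤ p) :
    ∃ (D D' : Dataset) (v : ℕ × ℕ),
      RemovesScope (fun i => (i.user, i.pub)) (fun _ => none) v D D' ∧
      SortedDS D' ∧
      (0.5 : ℝ) * ((p : ℝ) - 1) ≤ l1dist (postAttr a (fun i => (i.user, i.pub)) 1 D)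
        (postAttr a (fun i => (i.user, i.pub)) 1 D') := by
  obtain ⟨ℓ, -, hshare⟩ := (Finset.range p).exists_half_le_sum_erase
    (Finset.nonempty_range_iff.2 (by omega)) (share a)
    fun i _ j _ hij => share_add_share ha hij
  set P := (Finset.range p).erase ℓ
  refine ⟨reducedDS ℓ P, fullDS ℓ P, (0, ℓ), ⟨rfl, by simp [reducedDS]⟩, sortedDS_fullDS, ?_⟩
  have hℓP : ℓ ∉ P := Finset.notMem_erase ℓ _
  calc (0.5 : ℝ) * ((p : ℝ) - 1) = (((Finset.range p).card : ℝ) - 1) / 2 := by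
        rw [Finset.card_range]; ring
    _ ≤ ∑ m ∈ P, share a ℓ m := hshare
    _ ≤ _ := Finset.sum_le_sum fun m hm => share_le_abs_sub ha hm hℓP
    _ ≤ _ := sum_abs_sub_le_l1dist _ _ P _ fun m _ m' _ h => conv_edge_inj (congrArg Prod.snd h)
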